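/- arXiv:1907.00313 — 4 statements merged into one kernel-verified Lean document; each statement's English description precedes it below -/
import Mathlib

section
/- For the strict-rate-constrained UCB algorithm there exists an absolute constant C > 0 (independent of K, T, v, and the reward distributions) such that the regret satisfies Reg_T ≤ Σ_{i : Δ_i > 0} [ (16·ln T / Δ_i)·(1 − K·v)/(1 − (K−1)·v) + 2·(1 − K·v)²·Δ_i ] + C·K. -/
open MeasureTheory ProbabilityTheory Finset

namespace FairBandit

variable {Ω : Type} [MeasurableSpace Ω]

/-- Number of pulls of arm `i` among rounds `1, …, t`. -/
def pullCount {K : ℕ} (arm : ℕ → Ω → Fin K) (i : Fin K) (t : ℕ) (ω : Ω) : ℕ :=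
  ((Finset.Icc 1 t).filter (fun s => arm s ω = i)).card

/-- Empirical mean of arm `i` at round `t`:  average of the first `n_{t-1}(i)`
samples `X i 0, X i 1, …` of arm `i` (the sample `X i k` is observed at the
`(k+1)`-st pull of arm `i`). -/
noncomputable def empMean {K : ℕ} (X : Fin K → ℕ → Ω → ℝ) (arm : ℕ → Ω → Fin K)
    (i : Fin K) (t : ℕ) (ω : Ω) : ℝ :=
  (∑ k ∈ Finset.range (pullCount arm i (t - 1) ω), X i k ω) / (pullCount arm i (t - 1) ω)

/-- Upper confidence bound of arm `i` at round `t`. -/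
noncomputable def ucb {K : ℕ} (T : ℕ) (X : Fin K → ℕ → Ω → ℝ) (arm : ℕ → Ω → Fin K)
    (i : Fin K) (t : ℕ) (ω : Ω) : ℝ :=
  empMean X arm i t ω + 2 * Real.sqrt (Real.log T / (pullCount arm i (t - 1) ω))

/-- The stochastic bandit environment: for every arm `i` the samples
`X i 0, X i 1, …` take values in `[0,1]`, the whole family is (jointly)
independent, the samples of each arm are identically distributed, and the
mean of every sample of arm `i` is `μ i`. -/
def BanditEnv {K : ℕ} (P : Measure Ω) (X : Fin K → ℕ → Ω → ℝ) (μ : Fin K → ℝ) : Prop :=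
  (∀ i k, Measurable (X i k)) ∧
  (∀ i k ω, X i k ω ∈ Set.Icc (0 : ℝ) 1) ∧
  iIndepFun
    (fun p : Fin K × ℕ => X p.1 p.2) P ∧
  (∀ i k, Measure.map (X i k) P = Measure.map (X i 0) P) ∧
  (∀ i k, ∫ ω, X i k ω ∂P = μ i)

/-- Block offset of a round `t > K`:  writing `t - K = (j-1)·L + s` with
`s ∈ {1, …, L}`, the offset is `s`. -/
def offset (K L t : ℕ) : ℕ := (t - K - 1) % L + 1

/-- The non-prescheduled rounds among `{K+1, …, T}`. -/
def freeRounds (K L T : ℕ) (S : Finset ℕ) : Finset ℕ :=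
  (Finset.Icc (K + 1) T).filter (fun t => offset K L t ∉ S)

/-- The strict-rate-constrained UCB algorithm: the pulled arm `arm t` is the
`t`-th arm for `t = 1, …, K`; afterwards, prescheduled rounds (block offset in
`S`) pull the prescheduled arm `g s`, and all other rounds pull the arm with
largest UCB index (ties broken by smallest index). -/
def StrictUCB {K : ℕ} (T L : ℕ) (S : Finset ℕ) (g : ℕ → Fin K)
    (X : Fin K → ℕ → Ω → ℝ) (arm : ℕ → Ω → Fin K) : Prop :=
  (∀ t, Measurable (arm t)) ∧
  (∀ t ω, 1 ≤ t → t ≤ K → ((arm t ω : ℕ) = t - 1)) ∧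
  (∀ t ω, K < t → offset K L t ∈ S → arm t ω = g (offset K L t)) ∧
  (∀ t ω, K < t → offset K L t ∉ S →
    (∀ j, ucb T X arm j t ω ≤ ucb T X arm (arm t ω) t ω) ∧
    (∀ j, ucb T X arm j t ω = ucb T X arm (arm t ω) t ω → arm t ω ≤ j))

end FairBandit

/-!
Call an outcome *concentrated* if for every arm `j` and every `n ≤ T` the sum of the first `n`
samples of `j` lies within `2√(n log T)` of `n μ j`. By Hoeffding's inequality and a union bound
this fails with probability at most `2K/T`, and as the regret never exceeds `T`, the bad event
costs at most `2K`.

On a concentrated outcome `μ j ≤ UCB_t(j) ≤ μ j + 4√(log T / n_{t-1}(j))`, so a free round can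
choose an arm `i` with gap `Δ_i > 0` only while `n_{t-1}(i) Δ_i² ≤ 16 log T`. Let `t₀` be the last
free pull of `i`, preceded by `b` complete blocks, and let `F` be the number of free pulls of `i`.
Before `t₀` the arm was pulled once in the initial rounds, once by the schedule in each of the `b`
blocks and at `F - 1` free rounds, so `b + F ≤ n_{t₀-1}(i)`; a block has only `L - K` free rounds,
so `F ≤ (b + 1)(L - K)`. Together, `F ≤ (16 log T / Δ_i² + 1) (L - K) / (L - K + 1)`, and
`(L - K) / (L - K + 1) = (1 - K v) / (1 - (K - 1) v)`.
-/

open Real Finset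

section

variable {Ω : Type*} [MeasurableSpace Ω] {P : Measure Ω} [IsProbabilityMeasure P]

lemma measureReal_le_abs_sum_sub_integral_le {ι : Type*} {Y : ι → Ω → ℝ}
    (hind : iIndepFun Y P) (hmeas : ∀ i, Measurable (Y i)) (hY : ∀ i ω, Y i ω ∈ Set.Icc 0 1)
    (s : Finset ι) {ε : ℝ} (hε : 0 ≤ ε) :
    P.real {ω | ε ≤ |∑ i ∈ s, (Y i ω - P[Y i])|} ≤ 2 * exp (-2 * ε ^ 2 / #s) := by
  set Z : ι → Ω → ℝ := fun i ω ↦ Y i ω - P[Y i]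
  have hsubG : ∀ i ∈ s, HasSubgaussianMGF (Z i) ((‖(1 : ℝ) - 0‖₊ / 2) ^ 2) P :=
    fun i _ ↦ hasSubgaussianMGF_of_mem_Icc (hmeas i).aemeasurable (ae_of_all _ (hY i))
  have hZ : iIndepFun Z P :=
    hind.comp (fun i x ↦ x - ∫ ω, Y i ω ∂P) fun i ↦ measurable_id.sub_const _
  have hexp : -ε ^ 2 / (2 * ((∑ _i ∈ s, (‖(1 : ℝ) - 0‖₊ / 2) ^ 2 : NNReal) : ℝ)) =
      -2 * ε ^ 2 / #s := by
    simp only [sub_zero, nnnorm_one, sum_const, nsmul_eq_mul, NNReal.coe_mul, NNReal.coe_natCast,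
      NNReal.coe_pow, NNReal.coe_div, NNReal.coe_one, NNReal.coe_ofNat]
    ring
  have upper := HasSubgaussianMGF.measure_sum_ge_le_of_iIndepFun hZ hsubG hε
  have lower := HasSubgaussianMGF.measure_sum_ge_le_of_iIndepFun
    (hZ.comp (fun _ x ↦ -x) fun _ ↦ measurable_neg) (fun i hi ↦ (hsubG i hi).neg) hε
  simp only [hexp, Function.comp_apply, sum_neg_distrib] at upper lower
  calc P.real {ω | ε ≤ |∑ i ∈ s, Z i ω|}
      ≤ P.real ({ω | ε ≤ ∑ i ∈ s, Z i ω} ∪ {ω | ε ≤ -∑ i ∈ s, Z i ω}) :=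
        measureReal_mono fun _ hω ↦ by
          simpa only [Set.mem_union, Set.mem_ofPred_eq, le_abs] using hω
    _ ≤ _ := (measureReal_union_le _ _).trans (by linarith)

lemma integral_le_add_mul_measureReal {f : Ω → ℝ} {B : Set Ω} (hB : MeasurableSet B) {D M : ℝ}
    (hD : 0 ≤ D) (hf : ∀ ω, 0 ≤ f ω) (hfM : ∀ ω, f ω ≤ M) (hfD : ∀ ω ∉ B, f ω ≤ D) :
    ∫ ω, f ω ∂P ≤ D + M * P.real B := by
  have hint : Integrable (fun ω ↦ D + B.indicator (fun _ ↦ M) ω) P :=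
    (integrable_const D).add ((integrable_const M).indicator hB)
  calc ∫ ω, f ω ∂P ≤ ∫ ω, (D + B.indicator (fun _ ↦ M) ω) ∂P := by
        refine integral_mono_of_nonneg (ae_of_all _ hf) hint (ae_of_all _ fun ω ↦ ?_)
        by_cases hω : ω ∈ B
        · simp only [Set.indicator_of_mem hω]
          linarith [hfM ω]
        · simp only [Set.indicator_of_notMem hω]
          linarith [hfD ω hω]
    _ = D + M * P.real B := by
        rw [integral_add (integrable_const D) ((integrable_const M).indicator hB),
          integral_const, integral_indicator_const _ hB]
        simp [mul_comm]

end

lemma exp_neg_mul_log_le_inv_sq {T : ℝ} (hT : 1 ≤ T) : exp (-8 * log T) ≤ (T ^ 2)⁻¹ := by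
  rw [neg_mul, exp_neg, show 8 * log T = log (T ^ 8) by rw [log_pow]; norm_num,
    exp_log (by positivity)]
  exact inv_anti₀ (by positivity) (pow_le_pow_right₀ hT (by norm_num))

lemma abs_div_sub_le_of_abs_sub_mul_le {s m c n : ℝ} (hn : 0 < n)
    (h : |s - n * m| ≤ 2 * √(n * c)) : |s / n - m| ≤ 2 * √(c / n) := by
  have hsqrt : √(n * c) = √(c / n) * n := by
    rw [← sqrt_sq hn.le, ← sqrt_mul' _ (sq_nonneg n), sqrt_sq hn.le]
    congr 1
    field_simp
  rw [show s / n - m = (s - n * m) / n by field_simp, abs_div, abs_of_pos hn, div_le_iff₀ hn]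
  linarith

namespace FairBandit

-- Zero-based: writing `t - K = (j - 1) · L + s` with `s ∈ {1, …, L}`, `block K L t = j - 1`.
def block (K L t : ℕ) : ℕ := (t - K - 1) / L

lemma offset_mem_Icc {K L : ℕ} (hL : 0 < L) (t : ℕ) : offset K L t ∈ Icc 1 L :=
  mem_Icc.2 ⟨Nat.le_add_left _ _, Nat.mod_lt _ hL⟩

lemma offset_add_mul_add {K L j s : ℕ} (hs : s ∈ Icc 1 L) : offset K L (K + j * L + s) = s := by
  obtain ⟨hs1, hsL⟩ := mem_Icc.1 hs
  rw [offset, show K + j * L + s - K - 1 = s - 1 + j * L by omega, Nat.add_mul_mod_self_right,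
    Nat.mod_eq_of_lt (by omega)]
  omega

lemma eq_of_block_eq_of_offset_eq {K L t t' : ℕ} (ht : K < t) (ht' : K < t')
    (hb : block K L t = block K L t') (ho : offset K L t = offset K L t') : t = t' := by
  have e := Nat.div_add_mod (t - K - 1) L
  have e' := Nat.div_add_mod (t' - K - 1) L
  simp only [block, offset] at hb ho
  rw [hb, show (t - K - 1) % L = (t' - K - 1) % L by omega] at e
  omega

lemma block_mul_le {K L t : ℕ} : block K L t * L ≤ t - K - 1 :=
  Nat.div_mul_le_self _ _

lemma block_mono {K L t t' : ℕ} (h : t ≤ t') : block K L t ≤ block K L t' :=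
  Nat.div_le_div_right (by omega)

lemma add_mul_add_le_of_lt_block {K L t j s : ℕ} (hsL : s ≤ L) (hj : j < block K L t) :
    K + j * L + s ≤ t - 1 := by
  have hL : 0 < L := Nat.pos_of_ne_zero fun h ↦ by simp [block, h] at hj
  have : (j + 1) * L ≤ block K L t * L := Nat.mul_le_mul_right L hj
  have := block_mul_le (K := K) (L := L) (t := t)
  rw [add_mul] at *
  omega

lemma mem_freeRounds {K L T t : ℕ} {S : Finset ℕ} :
    t ∈ freeRounds K L T S ↔ K < t ∧ t ≤ T ∧ offset K L t ∉ S := by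
  rw [freeRounds, mem_filter, mem_Icc, Nat.succ_le_iff, and_assoc]

variable {Ω : Type} {K T L : ℕ} {S : Finset ℕ} {g : ℕ → Fin K} {X : Fin K → ℕ → Ω → ℝ}
  {μ : Fin K → ℝ} {arm : ℕ → Ω → Fin K}

lemma card_le_succ_block_mul (hL : 0 < L) (hSL : S ⊆ Icc 1 L) (hSc : #S = K) {F : Finset ℕ}
    (hF : F ⊆ freeRounds K L T S) {t₀ : ℕ} (ht₀ : ∀ t ∈ F, t ≤ t₀) :
    #F ≤ (block K L t₀ + 1) * (L - K) := by
  have hfree (t : ℕ) (ht : t ∈ F) := mem_freeRounds.1 (hF ht)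
  calc #F ≤ #(range (block K L t₀ + 1) ×ˢ (Icc 1 L \ S)) := by
        refine card_le_card_of_injOn (fun t ↦ (block K L t, offset K L t)) (fun t ht ↦ ?_) ?_
        · simp only [coe_product, coe_range, coe_sdiff, Set.mem_prod, Set.mem_Iio,
            Set.mem_sdiff, mem_coe]
          exact ⟨Nat.lt_succ_of_le (block_mono (ht₀ t ht)), offset_mem_Icc hL t, (hfree t ht).2.2⟩
        · intro t ht t' ht' h
          exact eq_of_block_eq_of_offset_eq (hfree t ht).1 (hfree t' ht').1
            (Prod.ext_iff.1 h).1 (Prod.ext_iff.1 h).2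
    _ = (block K L t₀ + 1) * (L - K) := by
        rw [card_product, card_range, card_sdiff_of_subset hSL, Nat.card_Icc, hSc,
          Nat.add_sub_cancel]

lemma pullCount_le (i : Fin K) (t : ℕ) (ω : Ω) : pullCount arm i t ω ≤ t :=
  (card_filter_le _ _).trans (by simp)

lemma sum_free_gap_le {istar : Fin K} (hgap1 : ∀ j, μ istar - μ j ≤ 1) (ω : Ω) :
    ∑ t ∈ freeRounds K L T S, (μ istar - μ (arm t ω)) ≤ T :=
  calc _ ≤ ∑ _t ∈ freeRounds K L T S, (1 : ℝ) := sum_le_sum fun t _ ↦ hgap1 _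
    _ ≤ T := by
      rw [sum_const, nsmul_one]
      exact_mod_cast (card_filter_le _ _).trans (by simp)

def Concentrated (T : ℕ) (X : Fin K → ℕ → Ω → ℝ) (μ : Fin K → ℝ) (ω : Ω) : Prop :=
  ∀ j, ∀ n ∈ Icc 1 T, |∑ k ∈ range n, X j k ω - n * μ j| < 2 * √(n * log T)

lemma Concentrated.abs_empMean_sub_le {ω : Ω} (hc : Concentrated T X μ ω) (j : Fin K) {t : ℕ}
    (hn : 1 ≤ pullCount arm j (t - 1) ω) (hnT : pullCount arm j (t - 1) ω ≤ T) :
    |empMean X arm j t ω - μ j| ≤ 2 * √(log T / pullCount arm j (t - 1) ω) :=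
  abs_div_sub_le_of_abs_sub_mul_le (by exact_mod_cast hn)
    (hc j _ (mem_Icc.2 ⟨hn, hnT⟩)).le

lemma Concentrated.ucb_mem_Icc {ω : Ω} (hc : Concentrated T X μ ω) (j : Fin K) {t : ℕ}
    (hn : 1 ≤ pullCount arm j (t - 1) ω) (hnT : pullCount arm j (t - 1) ω ≤ T) :
    ucb T X arm j t ω ∈ Set.Icc (μ j) (μ j + 4 * √(log T / pullCount arm j (t - 1) ω)) := by
  have h := abs_le.1 (hc.abs_empMean_sub_le j hn hnT)
  rw [ucb]
  constructor <;> linarith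

variable [MeasurableSpace Ω]

namespace StrictUCB

variable (halg : StrictUCB T L S g X arm)
include halg

lemma arm_initial (i : Fin K) (ω : Ω) : arm (i + 1) ω = i :=
  Fin.ext (by have := halg.2.1 (i + 1) ω (by omega) (by omega); omega)

lemma one_le_pullCount (i : Fin K) {t : ℕ} (ht : K ≤ t) (ω : Ω) : 1 ≤ pullCount arm i t ω :=
  card_pos.2 ⟨i + 1, mem_filter.2 ⟨mem_Icc.2 ⟨by omega, by omega⟩, halg.arm_initial i ω⟩⟩

lemma arm_prescheduled {s : ℕ} (hs : s ∈ S) (hSL : S ⊆ Icc 1 L) (j : ℕ) (ω : Ω) :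
    arm (K + j * L + s) ω = g s := by
  have ho := offset_add_mul_add (K := K) (j := j) (hSL hs)
  have := halg.2.2.1 (K + j * L + s) ω (by have := (mem_Icc.1 (hSL hs)).1; omega) (by rwa [ho])
  rwa [ho] at this

lemma pullCount_mul_sq_gap_le {ω : Ω} (hc : Concentrated T X μ ω) {t : ℕ} (hKt : K < t)
    (htT : t ≤ T) (hfree : offset K L t ∉ S) {i istar : Fin K} (hit : arm t ω = i)
    (hgap : μ i ≤ μ istar) :
    pullCount arm i (t - 1) ω * (μ istar - μ i) ^ 2 ≤ 16 * log T := by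
  have hn : ∀ j, 1 ≤ pullCount arm j (t - 1) ω := fun j ↦ halg.one_le_pullCount j (by omega) ω
  have hnT : ∀ j, pullCount arm j (t - 1) ω ≤ T := fun j ↦ (pullCount_le j _ ω).trans (by omega)
  have hnpos : (0 : ℝ) < pullCount arm i (t - 1) ω := by exact_mod_cast hn i
  have hlog : 0 ≤ log T / pullCount arm i (t - 1) ω :=
    div_nonneg (log_natCast_nonneg T) hnpos.le
  have hucb := (halg.2.2.2 t ω hKt hfree).1 istar
  rw [hit] at hucb
  have hgap_le : μ istar - μ i ≤ 4 * √(log T / pullCount arm i (t - 1) ω) := by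
    linarith [(hc.ucb_mem_Icc i (hn i) (hnT i)).2,
      (hc.ucb_mem_Icc istar (hn istar) (hnT istar)).1]
  calc pullCount arm i (t - 1) ω * (μ istar - μ i) ^ 2
      ≤ pullCount arm i (t - 1) ω * (4 * √(log T / pullCount arm i (t - 1) ω)) ^ 2 := by
        gcongr
    _ = 16 * log T := by
        rw [mul_pow, sq_sqrt hlog]
        field_simp
        ring

lemma block_add_one_le_card_scheduled_pulls (hSL : S ⊆ Icc 1 L) {s : ℕ} (hs : s ∈ S) {t₀ : ℕ}
    (ht₀ : K < t₀) (ω : Ω) :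
    block K L t₀ + 1 ≤ #(((Icc 1 (t₀ - 1)).filter (fun r ↦ arm r ω = g s)).filter
      (fun r ↦ r ≤ K ∨ offset K L r ∈ S)) := by
  obtain ⟨hs1, hsL⟩ := mem_Icc.1 (hSL hs)
  have hL : 0 < L := by omega
  set scheduled := (range (block K L t₀)).image (fun j ↦ K + j * L + s)
  have hinit : (g s : ℕ) + 1 ∉ scheduled := fun h ↦ by
    obtain ⟨j, -, hj⟩ := mem_image.1 h
    omega
  have hcard : #scheduled = block K L t₀ :=
    (card_image_of_injective _ fun j j' h ↦
      Nat.eq_of_mul_eq_mul_right hL (by simpa using h)).trans (card_range _)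
  rw [← hcard, ← card_insert_of_notMem hinit]
  refine card_le_card fun r hr ↦ ?_
  simp only [mem_filter, mem_Icc]
  rcases mem_insert.1 hr with rfl | hr
  · exact ⟨⟨⟨by omega, by omega⟩, halg.arm_initial _ ω⟩, Or.inl (by omega)⟩
  · obtain ⟨j, hj, rfl⟩ := mem_image.1 hr
    refine ⟨⟨⟨by omega, add_mul_add_le_of_lt_block hsL (mem_range.1 hj)⟩,
      halg.arm_prescheduled hs hSL j ω⟩, Or.inr ?_⟩
    rwa [offset_add_mul_add (hSL hs)]

lemma block_add_card_le_pullCount (hSL : S ⊆ Icc 1 L) (hg : Set.SurjOn g S Set.univ)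
    {i : Fin K} {ω : Ω} {F : Finset ℕ} (hF : F ⊆ (freeRounds K L T S).filter (arm · ω = i))
    {t₀ : ℕ} (ht₀ : t₀ ∈ F) (hmax : ∀ t ∈ F, t ≤ t₀) :
    block K L t₀ + #F ≤ pullCount arm i (t₀ - 1) ω := by
  obtain ⟨s, hs, rfl⟩ := hg (Set.mem_univ i)
  have hfree (t : ℕ) (ht : t ∈ F) := (mem_filter.1 (hF ht)).imp_left mem_freeRounds.1
  have hscheduled := halg.block_add_one_le_card_scheduled_pulls hSL hs (hfree t₀ ht₀).1.1 ω
  have hfree_pulls : #(F.erase t₀) ≤ #(((Icc 1 (t₀ - 1)).filter (fun r ↦ arm r ω = g s)).filter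
      (fun r ↦ ¬ (r ≤ K ∨ offset K L r ∈ S))) := by
    refine card_le_card fun r hr ↦ ?_
    obtain ⟨hne, hr⟩ := mem_erase.1 hr
    obtain ⟨⟨hKr, -, hoff⟩, hit⟩ := hfree r hr
    have := hmax r hr
    simp only [mem_filter, mem_Icc, not_or, not_le]
    exact ⟨⟨⟨by omega, by omega⟩, hit⟩, hKr, hoff⟩
  rw [card_erase_of_mem ht₀] at hfree_pulls
  have := card_filter_add_card_filter_not (s := (Icc 1 (t₀ - 1)).filter (arm · ω = g s))
    (fun r ↦ r ≤ K ∨ offset K L r ∈ S)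
  have := card_pos.2 ⟨t₀, ht₀⟩
  unfold pullCount
  omega

lemma card_free_pulls_mul_le (hL : 0 < L) (hSL : S ⊆ Icc 1 L) (hSc : #S = K)
    (hg : Set.SurjOn g S Set.univ) {i : Fin K} {ω : Ω} {u : ℝ} (hu : 0 ≤ u)
    (hpull : ∀ t ∈ (freeRounds K L T S).filter (fun t ↦ arm t ω = i),
      (pullCount arm i (t - 1) ω : ℝ) ≤ u) :
    (#((freeRounds K L T S).filter (fun t ↦ arm t ω = i)) : ℝ) * ((L - K : ℕ) + 1) ≤
      (u + 1) * (L - K : ℕ) := by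
  set F := (freeRounds K L T S).filter (fun t ↦ arm t ω = i)
  rcases F.eq_empty_or_nonempty with hF | hF
  · rw [hF, card_empty, Nat.cast_zero, zero_mul]
    positivity
  have hmax : ∀ t ∈ F, t ≤ F.max' hF := fun t ht ↦ F.le_max' t ht
  have hfree : (#F : ℝ) ≤ (block K L (F.max' hF) + 1) * (L - K : ℕ) := by
    exact_mod_cast card_le_succ_block_mul hL hSL hSc (filter_subset _ _) hmax
  have hpulls : (block K L (F.max' hF) : ℝ) + #F ≤ pullCount arm i (F.max' hF - 1) ω := by
    exact_mod_cast halg.block_add_card_le_pullCount hSL hg subset_rfl (F.max'_mem hF) hmax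
  have := hpull _ (F.max'_mem hF)
  nlinarith [(Nat.cast_nonneg (L - K) : (0 : ℝ) ≤ (L - K : ℕ))]

lemma card_free_pulls_mul_gap_le {ω : Ω} (hc : Concentrated T X μ ω) (hL : 0 < L)
    (hSL : S ⊆ Icc 1 L) (hSc : #S = K) (hg : Set.SurjOn g S Set.univ) {i istar : Fin K}
    (hgap : 0 < μ istar - μ i) (hgap1 : μ istar - μ i ≤ 1) :
    #((freeRounds K L T S).filter (fun t ↦ arm t ω = i)) * (μ istar - μ i) ≤
      16 * log T / (μ istar - μ i) * ((L - K : ℕ) / ((L - K : ℕ) + 1)) + 1 := by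
  set Δ := μ istar - μ i
  set r : ℝ := (L - K : ℕ) / ((L - K : ℕ) + 1)
  have hr1 : r ≤ 1 := div_le_one_of_le₀ (by linarith) (by positivity)
  have hpull : ∀ t ∈ (freeRounds K L T S).filter (fun t ↦ arm t ω = i),
      (pullCount arm i (t - 1) ω : ℝ) ≤ 16 * log T / Δ ^ 2 := fun t ht ↦ by
    obtain ⟨⟨hKt, htT, hoff⟩, hit⟩ := (mem_filter.1 ht).imp_left mem_freeRounds.1
    rw [le_div_iff₀ (by positivity)]
    exact halg.pullCount_mul_sq_gap_le hc hKt htT hoff hit (by linarith)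
  have hcard := halg.card_free_pulls_mul_le hL hSL hSc hg (by positivity) hpull
  rw [← le_div_iff₀ (by positivity), mul_div_assoc] at hcard
  calc _ ≤ (16 * log T / Δ ^ 2 + 1) * r * Δ := by gcongr
    _ = 16 * log T / Δ * r + r * Δ := by field_simp
    _ ≤ 16 * log T / Δ * r + 1 := by gcongr; exact mul_le_one₀ hr1 hgap.le hgap1

lemma sum_free_gap_le_of_concentrated {ω : Ω} (hc : Concentrated T X μ ω) (hL : 0 < L)
    (hSL : S ⊆ Icc 1 L) (hSc : #S = K) (hg : Set.SurjOn g S Set.univ) {istar : Fin K}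
    (hstar : ∀ j, μ j ≤ μ istar) (hgap1 : ∀ j, μ istar - μ j ≤ 1) :
    ∑ t ∈ freeRounds K L T S, (μ istar - μ (arm t ω)) ≤
      ∑ i ∈ univ.filter (fun i ↦ 0 < μ istar - μ i),
        16 * log T / (μ istar - μ i) * ((L - K : ℕ) / ((L - K : ℕ) + 1)) + K := by
  calc _ ≤ ∑ i ∈ univ.filter (fun i ↦ 0 < μ istar - μ i),
        (16 * log T / (μ istar - μ i) * ((L - K : ℕ) / ((L - K : ℕ) + 1)) + 1) := by
        rw [sum_filter, ← sum_fiberwise (freeRounds K L T S) (fun t ↦ arm t ω)]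
        refine sum_le_sum fun i _ ↦ ?_
        rw [sum_congr rfl fun t ht ↦ by rw [(mem_filter.1 ht).2], sum_const, nsmul_eq_mul]
        split_ifs with hgap
        · exact halg.card_free_pulls_mul_gap_le hc hL hSL hSc hg hgap (hgap1 i)
        · rw [le_antisymm (not_lt.1 hgap) (sub_nonneg.2 (hstar i)), mul_zero]
    _ ≤ _ := by
        rw [sum_add_distrib, sum_const, nsmul_one]
        gcongr
        exact_mod_cast (card_filter_le _ _).trans (card_fin K).le

end StrictUCB

lemma measurableSet_concentrated (hX : ∀ i k, Measurable (X i k)) :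
    MeasurableSet {ω | Concentrated T X μ ω} := by
  have : {ω | Concentrated T X μ ω} =
      ⋂ j, ⋂ n ∈ Icc 1 T, {ω | |∑ k ∈ range n, X j k ω - n * μ j| < 2 * √(n * log T)} := by
    ext ω
    simp only [Concentrated, Set.mem_ofPred_eq, Set.mem_iInter]
  rw [this]
  exact .iInter fun j ↦ .biInter (Set.to_countable _) fun n _ ↦
    measurableSet_lt (by fun_prop) measurable_const

variable {P : Measure Ω} [IsProbabilityMeasure P]

lemma BanditEnv.mean_mem_Icc (henv : BanditEnv P X μ) (i : Fin K) : μ i ∈ Set.Icc 0 1 := by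
  rw [← henv.2.2.2.2 i 0]
  exact ⟨integral_nonneg fun ω ↦ (henv.2.1 i 0 ω).1,
    (integral_mono_of_nonneg (ae_of_all _ fun ω ↦ (henv.2.1 i 0 ω).1) (integrable_const 1)
      (ae_of_all _ fun ω ↦ (henv.2.1 i 0 ω).2)).trans (by simp)⟩

lemma BanditEnv.measureReal_le_abs_sum_sub_le (henv : BanditEnv P X μ) (hT : 1 ≤ T)
    (j : Fin K) {n : ℕ} (hn : 1 ≤ n) :
    P.real {ω | 2 * √(n * log T) ≤ |∑ k ∈ range n, X j k ω - n * μ j|} ≤ 2 / T ^ 2 := by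
  have hind : iIndepFun (fun k ↦ X j k) P :=
    henv.2.2.1.precomp (g := fun k ↦ (j, k)) fun _ _ h ↦ (Prod.mk.inj h).2
  have hsum : ∀ ω, ∑ k ∈ range n, (X j k ω - P[X j k]) = ∑ k ∈ range n, X j k ω - n * μ j := by
    intro ω
    simp only [henv.2.2.2.2, sum_sub_distrib, sum_const, card_range, nsmul_eq_mul]
  have h := measureReal_le_abs_sum_sub_integral_le hind (henv.1 j) (henv.2.1 j) (range n)
    (ε := 2 * √(n * log T)) (by positivity)
  have hexp : -2 * (2 * √(n * log T)) ^ 2 / n = -8 * log T := by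
    rw [mul_pow, sq_sqrt (by positivity)]
    field_simp
    ring
  simp only [hsum, card_range, hexp] at h
  refine h.trans ?_
  rw [div_eq_mul_inv]
  gcongr
  exact exp_neg_mul_log_le_inv_sq (by exact_mod_cast hT)

lemma BanditEnv.measureReal_not_concentrated_le (henv : BanditEnv P X μ) (hT : 1 ≤ T) :
    P.real {ω | ¬ Concentrated T X μ ω} ≤ 2 * K / T := by
  have : {ω | ¬ Concentrated T X μ ω} = ⋃ j ∈ (univ : Finset (Fin K)), ⋃ n ∈ Icc 1 T,
      {ω | 2 * √(n * log T) ≤ |∑ k ∈ range n, X j k ω - n * μ j|} := by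
    ext ω
    simp only [Concentrated, Set.mem_ofPred_eq, Set.mem_iUnion, not_forall, not_lt, mem_univ,
      exists_const, exists_prop]
  rw [this]
  calc _ ≤ ∑ j : Fin K, ∑ n ∈ Icc 1 T, (2 / T ^ 2 : ℝ) :=
        (measureReal_biUnion_finset_le _ _).trans <| sum_le_sum fun j _ ↦
          (measureReal_biUnion_finset_le _ _).trans <| sum_le_sum fun n hn ↦
            henv.measureReal_le_abs_sum_sub_le hT j (mem_Icc.1 hn).1
    _ = 2 * K / T := by
        have : (T : ℝ) ≠ 0 := by positivity
        simp only [sum_const, Nat.card_Icc, add_tsub_cancel_right, nsmul_eq_mul, card_univ,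
          Fintype.card_fin]
        field_simp

lemma StrictUCB.integral_sum_free_gap_le (halg : StrictUCB T L S g X arm)
    (henv : BanditEnv P X μ) (hT : 1 ≤ T) (hL : 0 < L) (hSL : S ⊆ Icc 1 L) (hSc : #S = K)
    (hg : Set.SurjOn g S Set.univ) {istar : Fin K} (hstar : ∀ j, μ j ≤ μ istar) :
    ∫ ω, (∑ t ∈ freeRounds K L T S, (μ istar - μ (arm t ω))) ∂P ≤
      ∑ i ∈ univ.filter (fun i ↦ 0 < μ istar - μ i),
        16 * log T / (μ istar - μ i) * ((L - K : ℕ) / ((L - K : ℕ) + 1)) + 3 * K := by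
  have hgap1 (j : Fin K) : μ istar - μ j ≤ 1 := by
    linarith [(henv.mean_mem_Icc istar).2, (henv.mean_mem_Icc j).1]
  set D := ∑ i ∈ univ.filter (fun i ↦ 0 < μ istar - μ i),
    16 * log T / (μ istar - μ i) * ((L - K : ℕ) / ((L - K : ℕ) + 1)) + K
  have hD : 0 ≤ D := add_nonneg (sum_nonneg fun i hi ↦ by
    have := (mem_filter.1 hi).2
    positivity) (Nat.cast_nonneg K)
  have hbad := henv.measureReal_not_concentrated_le hT
  rw [le_div_iff₀ (by positivity)] at hbad
  calc _ ≤ D + T * P.real {ω | ¬ Concentrated T X μ ω} :=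
        integral_le_add_mul_measureReal (measurableSet_concentrated henv.1).compl hD
          (fun ω ↦ sum_nonneg fun t _ ↦ sub_nonneg.2 (hstar _)) (sum_free_gap_le hgap1)
          fun ω hω ↦ halg.sum_free_gap_le_of_concentrated (not_not.1 hω) hL hSL hSc hg hstar hgap1
    _ ≤ _ := by linarith

lemma one_sub_div_one_sub_eq (hKL : K ≤ L) (hL : 0 < L) :
    (1 - (K : ℝ) * (1 / (L : ℝ))) / (1 - ((K : ℝ) - 1) * (1 / (L : ℝ))) =
      (L - K : ℕ) / ((L - K : ℕ) + 1) := by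
  have : (L : ℝ) ≠ 0 := by positivity
  rw [Nat.cast_sub hKL]
  field_simp
  ring_nf

end FairBandit

open FairBandit MeasureTheory ProbabilityTheory

/-- For the strict-rate-constrained UCB algorithm there is
an absolute constant `C > 0` such that
`Reg_T ≤ ∑_{i : Δ_i > 0} [ (16 ln T / Δ_i)·(1-Kv)/(1-(K-1)v) + 2(1-Kv)²·Δ_i ] + C·K`,
where `v = 1/L` and `Reg_T = E[∑_{t ∈ I} (μ* - μ(i_t))]` with `I` the set of
non-prescheduled rounds. -/
theorem strict_ucb_regret_bound :
    ∃ C : ℝ, 0 < C ∧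
      ∀ (Ω : Type) (_ : MeasurableSpace Ω) (P : Measure Ω), IsProbabilityMeasure P →
      ∀ (K T L : ℕ) (S : Finset ℕ) (g : ℕ → Fin K) (X : Fin K → ℕ → Ω → ℝ)
        (μ : Fin K → ℝ) (istar : Fin K) (arm : ℕ → Ω → Fin K),
        2 ≤ K → max K 2 ≤ T → K ≤ L →
        S ⊆ Finset.Icc 1 L → S.card = K → Set.BijOn g ↑S (Set.univ : Set (Fin K)) →
        BanditEnv P X μ → StrictUCB T L S g X arm →
        (∀ j, μ j ≤ μ istar) →
        (∫ ω, (∑ t ∈ freeRounds K L T S, (μ istar - μ (arm t ω))) ∂P) ≤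
          (∑ i ∈ (Finset.univ : Finset (Fin K)).filter (fun i => 0 < μ istar - μ i),
            ((16 * Real.log T / (μ istar - μ i)) *
                ((1 - (K : ℝ) * (1 / (L : ℝ))) / (1 - ((K : ℝ) - 1) * (1 / (L : ℝ))))
              + 2 * (1 - (K : ℝ) * (1 / (L : ℝ))) ^ 2 * (μ istar - μ i))) + C * K := by
  refine ⟨3, by norm_num, ?_⟩
  intro Ω _ P _ K T L S g X μ istar arm hK hT hKL hSL hSc hg henv halg hstar
  have hL : 0 < L := by omega
  rw [one_sub_div_one_sub_eq hKL hL]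
  refine (halg.integral_sum_free_gap_le henv (by omega) hL hSL hSc hg.surjOn hstar).trans ?_
  gcongr with i hi
  have := (mem_filter.1 hi).2
  exact le_add_of_nonneg_right (by positivity)
end

section
/- Let T ≥ 2 be an integer, let X_1, X_2, … be i.i.d. random variables taking values in [0,1] with mean μ on a probability space, and let N be any random variable on the same space (with arbitrary dependence on the X_j) taking values in the integer interval {k_s, …, k_e}, where 1 ≤ k_s ≤ k_e are integers. Then P( μ − (1/N)·Σ_{j=1}^{N} X_j ≥ 2·√(ln T / N) ) ≤ (k_e − k_s + 1)/T². -/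
open MeasureTheory ProbabilityTheory

/-! For a fixed sample size `n`, Hoeffding's inequality (each `μ - X j` is sub-Gaussian with
parameter `1/4`) bounds the probability that the empirical mean of the first `n` samples lies
`2 √(ln T / n)` below `μ` by `exp (-8 ln T) ≤ T⁻²`. Whatever its dependence on the samples, the
random index `N` takes one of the `ke - ks + 1` values in `[ks, ke]`, so the event is covered by
the union of these fixed-`n` events and a union bound finishes. -/

theorem measure_setOf_apply_le_sum {Ω ι : Type*} [MeasurableSpace Ω] (P : Measure Ω)
    (p : ι → Ω → Prop) (N : Ω → ι) (s : Finset ι) (hN : ∀ ω, N ω ∈ s) :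
    P {ω | p (N ω) ω} ≤ ∑ i ∈ s, P {ω | p i ω} := calc
  P {ω | p (N ω) ω} ≤ P (⋃ i ∈ s, {ω | p i ω}) :=
    measure_mono fun ω hω => Set.mem_biUnion (hN ω) hω
  _ ≤ ∑ i ∈ s, P {ω | p i ω} := measure_biUnion_finset_le _ _

theorem measureReal_le_sub_sampleMean_le_exp {Ω : Type*} [MeasurableSpace Ω] (P : Measure Ω)
    [IsProbabilityMeasure P] (X : ℕ → Ω → ℝ) (μ : ℝ)
    (hXmeas : ∀ j, AEMeasurable (X j) P) (hXrange : ∀ j, ∀ᵐ ω ∂P, X j ω ∈ Set.Icc (0 : ℝ) 1)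
    (hXindep : iIndepFun X P) (hXmean : ∀ j, P[X j] = μ)
    {n : ℕ} (hn : 0 < n) {δ : ℝ} (hδ : 0 ≤ δ) :
    P.real {ω | δ ≤ μ - (∑ j ∈ Finset.range n, X j ω) / n} ≤ Real.exp (-2 * n * δ ^ 2) := by
  have hn' : (0 : ℝ) < n := Nat.cast_pos.2 hn
  have hsubG : ∀ j, HasSubgaussianMGF (fun ω => μ - X j ω) ((‖(1 : ℝ) - 0‖₊ / 2) ^ 2) P :=
    fun j => by
      convert (hasSubgaussianMGF_of_mem_Icc (hXmeas j) (hXrange j)).neg using 1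
      ext ω
      simp [hXmean j]
  have hindep : iIndepFun (fun j ω => μ - X j ω) P :=
    hXindep.comp (fun _ x => μ - x) fun _ => measurable_const.sub measurable_id
  have hevent : {ω | δ ≤ μ - (∑ j ∈ Finset.range n, X j ω) / n} =
      {ω | n * δ ≤ ∑ j ∈ Finset.range n, (μ - X j ω)} := by
    ext ω
    simp only [Set.mem_ofPred_eq, Finset.sum_sub_distrib, Finset.sum_const, Finset.card_range,
      nsmul_eq_mul]
    rw [← mul_le_mul_iff_of_pos_left hn', mul_sub, mul_div_cancel₀ _ hn'.ne']
  rw [hevent]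
  refine (HasSubgaussianMGF.measure_sum_range_ge_le_of_iIndepFun hindep (fun j _ => hsubG j)
    (mul_nonneg hn'.le hδ)).trans_eq ?_
  congr 1
  simp only [sub_zero, nnnorm_one, one_div, inv_pow, NNReal.coe_inv, NNReal.coe_pow,
    NNReal.coe_ofNat, neg_mul]
  field_simp

theorem measure_two_sqrt_log_div_le_sub_sampleMean_le {Ω : Type*} [MeasurableSpace Ω]
    (P : Measure Ω) [IsProbabilityMeasure P] (X : ℕ → Ω → ℝ) (μ : ℝ)
    (hXmeas : ∀ j, AEMeasurable (X j) P) (hXrange : ∀ j, ∀ᵐ ω ∂P, X j ω ∈ Set.Icc (0 : ℝ) 1)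
    (hXindep : iIndepFun X P) (hXmean : ∀ j, P[X j] = μ)
    {n : ℕ} (hn : 0 < n) {T : ℝ} (hT : 1 ≤ T) :
    P {ω | 2 * Real.sqrt (Real.log T / n) ≤ μ - (∑ j ∈ Finset.range n, X j ω) / n} ≤
      ENNReal.ofReal (1 / T ^ 2) := by
  have hlogT : 0 ≤ Real.log T := Real.log_nonneg hT
  rw [← ofReal_measureReal]
  refine ENNReal.ofReal_le_ofReal ?_
  calc _ ≤ Real.exp (-2 * n * (2 * Real.sqrt (Real.log T / n)) ^ 2) :=
        measureReal_le_sub_sampleMean_le_exp P X μ hXmeas hXrange hXindep hXmean hn (by positivity)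
    _ = Real.exp (-(8 * Real.log T)) := by
        rw [mul_pow, Real.sq_sqrt (by positivity)]
        field_simp
        ring_nf
    _ ≤ Real.exp (-(2 * Real.log T)) := Real.exp_le_exp.2 (by linarith)
    _ = 1 / T ^ 2 := by
        rw [Real.exp_neg, ← Real.log_rpow (by linarith), Real.exp_log (by positivity),
          one_div, Real.rpow_two]

theorem random_index_hoeffding_lower_general (Ω : Type) [MeasurableSpace Ω]
    (P : Measure Ω) [IsProbabilityMeasure P] (T : ℕ) (X : ℕ → Ω → ℝ) (μ : ℝ)
    (N : Ω → ℕ) (ks ke : ℕ)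
    (hT : 2 ≤ T)
    (hXmeas : ∀ j, Measurable (X j))
    (hXrange : ∀ j ω, X j ω ∈ Set.Icc (0 : ℝ) 1)
    (hXindep : iIndepFun X P)
    (hXmean : ∀ j, ∫ ω, X j ω ∂P = μ)
    (hks : 1 ≤ ks) (hke : ks ≤ ke)
    (hNrange : ∀ ω, N ω ∈ Set.Icc ks ke) :
    P {ω | μ - (∑ j ∈ Finset.range (N ω), X j ω) / (N ω) ≥
        2 * Real.sqrt (Real.log T / (N ω))} ≤
      ENNReal.ofReal (((ke : ℝ) - (ks : ℝ) + 1) / (T : ℝ) ^ 2) := calc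
  _ ≤ ∑ n ∈ Finset.Icc ks ke,
        P {ω | 2 * Real.sqrt (Real.log T / n) ≤ μ - (∑ j ∈ Finset.range n, X j ω) / n} :=
      measure_setOf_apply_le_sum P
        (fun (n : ℕ) ω => 2 * Real.sqrt (Real.log T / n) ≤ μ - (∑ j ∈ Finset.range n, X j ω) / n)
        N _ fun ω => Finset.mem_Icc.2 (hNrange ω)
  _ ≤ ∑ _n ∈ Finset.Icc ks ke, ENNReal.ofReal (1 / (T : ℝ) ^ 2) :=
      Finset.sum_le_sum fun n hn =>
        measure_two_sqrt_log_div_le_sub_sampleMean_le P X μ (fun j => (hXmeas j).aemeasurable)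
          (fun j => ae_of_all _ (hXrange j)) hXindep hXmean
          (hks.trans (Finset.mem_Icc.1 hn).1) (by exact_mod_cast (by omega : 1 ≤ T))
  _ = ENNReal.ofReal (((ke : ℝ) - (ks : ℝ) + 1) / (T : ℝ) ^ 2) := by
      rw [Finset.sum_const, Nat.card_Icc, nsmul_eq_mul, ← ENNReal.ofReal_natCast,
        ← ENNReal.ofReal_mul (Nat.cast_nonneg _), Nat.cast_sub (by omega)]
      congr 1
      push_cast
      ring

/-- Let `T ≥ 2`, let `X 0, X 1, …` be i.i.d. `[0,1]`-valued
random variables with mean `μ` (the sample `X j` being the `(j+1)`-st sample),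
and let `N` be any random variable taking values in the integer interval
`{ks, …, ke}` with `1 ≤ ks ≤ ke` (with arbitrary dependence on the `X j`).
Then `P( μ - (1/N)·∑_{j=1}^{N} X_j ≥ 2·√(ln T / N) ) ≤ (ke - ks + 1)/T²`. -/
theorem random_index_hoeffding_lower (Ω : Type) [MeasurableSpace Ω]
    (P : Measure Ω) [IsProbabilityMeasure P] (T : ℕ) (X : ℕ → Ω → ℝ) (μ : ℝ)
    (N : Ω → ℕ) (ks ke : ℕ)
    (hT : 2 ≤ T)
    (hXmeas : ∀ j, Measurable (X j))
    (hXrange : ∀ j ω, X j ω ∈ Set.Icc (0 : ℝ) 1)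
    (hXindep : iIndepFun X P)
    (hXident : ∀ j, Measure.map (X j) P = Measure.map (X 0) P)
    (hXmean : ∀ j, ∫ ω, X j ω ∂P = μ)
    (hNmeas : Measurable N)
    (hks : 1 ≤ ks) (hke : ks ≤ ke)
    (hNrange : ∀ ω, N ω ∈ Set.Icc ks ke) :
    P {ω | μ - (∑ j ∈ Finset.range (N ω), X j ω) / (N ω) ≥
        2 * Real.sqrt (Real.log T / (N ω))} ≤
      ENNReal.ofReal (((ke : ℝ) - (ks : ℝ) + 1) / (T : ℝ) ^ 2) :=
  random_index_hoeffding_lower_general Ω P T X μ N ks ke hT hXmeas hXrange hXindep hXmean hks hke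
    hNrange
end

section
/- Let T ≥ 2 be an integer, let X_1, X_2, … be i.i.d. random variables taking values in [0,1] with mean μ on a probability space, and let N be any random variable on the same space (with arbitrary dependence on the X_j) taking values in the integer interval {k_s, …, k_e}, where 1 ≤ k_s ≤ k_e are integers. Then P( (1/N)·Σ_{j=1}^{N} X_j − μ ≥ 2·√(ln T / N) ) ≤ (k_e − k_s + 1)/T². -/
open MeasureTheory ProbabilityTheory

/-! For each fixed `n ∈ {ks, …, ke}`, Hoeffding's inequality bounds the probability that the mean
of the first `n` samples exceeds `μ + 2√(ln T / n)` by `exp (-8 ln T) ≤ T⁻²`. Whatever its dependence on the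
samples, `N` takes one of these `ke - ks + 1` values, so a union bound over them suffices. -/

lemma measure_setOf_at_index_le_sum {Ω ι : Type*} [MeasurableSpace Ω] (P : Measure Ω)
    {s : Finset ι} {N : Ω → ι} (hN : ∀ ω, N ω ∈ s) (p : ι → Ω → Prop) :
    P {ω | p (N ω) ω} ≤ ∑ i ∈ s, P {ω | p i ω} :=
  calc P {ω | p (N ω) ω} ≤ P (⋃ i ∈ s, {ω | p i ω}) :=
        measure_mono fun ω hω => Set.mem_biUnion (hN ω) hω
    _ ≤ ∑ i ∈ s, P {ω | p i ω} := measure_biUnion_finset_le _ _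

section Hoeffding

variable {Ω : Type*} [MeasurableSpace Ω] {P : Measure Ω} [IsProbabilityMeasure P]
  {X : ℕ → Ω → ℝ} {μ : ℝ}

lemma hasSubgaussianMGF_sub_mean_of_mem_Icc_zero_one
    (hXmeas : ∀ j, Measurable (X j)) (hXrange : ∀ j ω, X j ω ∈ Set.Icc (0 : ℝ) 1)
    (hXmean : ∀ j, ∫ ω, X j ω ∂P = μ) (j : ℕ) :
    HasSubgaussianMGF (fun ω => X j ω - μ) (1 / 4) P := by
  have h := hasSubgaussianMGF_of_mem_Icc (hXmeas j).aemeasurable (ae_of_all P (hXrange j))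
  rw [hXmean j] at h
  convert h using 1
  norm_num

theorem measureReal_le_empiricalMean_sub_le
    (hXmeas : ∀ j, Measurable (X j)) (hXrange : ∀ j ω, X j ω ∈ Set.Icc (0 : ℝ) 1)
    (hXindep : iIndepFun X P) (hXmean : ∀ j, ∫ ω, X j ω ∂P = μ)
    {n : ℕ} (hn : 0 < n) {ε : ℝ} (hε : 0 ≤ ε) :
    P.real {ω | ε ≤ (∑ j ∈ Finset.range n, X j ω) / n - μ} ≤ Real.exp (-2 * n * ε ^ 2) := by
  have hn' : (0 : ℝ) < n := Nat.cast_pos.mpr hn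
  have hcentered : iIndepFun (fun j ω => X j ω - μ) P :=
    hXindep.comp (fun _ x => x - μ) fun _ => measurable_id.sub_const μ
  have hset : {ω | ε ≤ (∑ j ∈ Finset.range n, X j ω) / n - μ}
      = {ω | n * ε ≤ ∑ j ∈ Finset.range n, (X j ω - μ)} := by
    ext ω
    simp only [Set.mem_ofPred_eq, Finset.sum_sub_distrib, Finset.sum_const, Finset.card_range,
      nsmul_eq_mul, le_sub_iff_add_le, le_div_iff₀ hn']
    ring_nf
  rw [hset]
  refine (HasSubgaussianMGF.measure_sum_range_ge_le_of_iIndepFun hcentered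
    (fun j _ => hasSubgaussianMGF_sub_mean_of_mem_Icc_zero_one hXmeas hXrange hXmean j)
    (by positivity)).trans_eq ?_
  congr 1
  push_cast
  field_simp
  ring

theorem measure_two_mul_sqrt_log_le_empiricalMean_sub_le
    (hXmeas : ∀ j, Measurable (X j)) (hXrange : ∀ j ω, X j ω ∈ Set.Icc (0 : ℝ) 1)
    (hXindep : iIndepFun X P) (hXmean : ∀ j, ∫ ω, X j ω ∂P = μ)
    {n : ℕ} (hn : 0 < n) {T : ℝ} (hT : 1 ≤ T) :
    P {ω | 2 * √(Real.log T / n) ≤ (∑ j ∈ Finset.range n, X j ω) / n - μ} ≤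
      ENNReal.ofReal (1 / T ^ 2) := by
  have hlog : 0 ≤ Real.log T := Real.log_nonneg hT
  rw [← ofReal_measureReal]
  refine ENNReal.ofReal_le_ofReal ?_
  calc _ ≤ Real.exp (-2 * n * (2 * √(Real.log T / n)) ^ 2) :=
        measureReal_le_empiricalMean_sub_le hXmeas hXrange hXindep hXmean hn (by positivity)
    _ = Real.exp (-(8 * Real.log T)) := by
        rw [mul_pow, Real.sq_sqrt (by positivity)]
        field_simp
        ring_nf
    _ ≤ Real.exp (-(2 * Real.log T)) := by gcongr; norm_num
    _ = 1 / T ^ 2 := by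
        rw [Real.exp_neg, ← Nat.cast_ofNat, Real.exp_nat_mul, Real.exp_log (by linarith),
          one_div]

end Hoeffding

theorem random_index_hoeffding_upper_general (Ω : Type) [MeasurableSpace Ω]
    (P : Measure Ω) [IsProbabilityMeasure P] (T : ℕ) (X : ℕ → Ω → ℝ) (μ : ℝ)
    (N : Ω → ℕ) (ks ke : ℕ)
    (hT : 2 ≤ T)
    (hXmeas : ∀ j, Measurable (X j))
    (hXrange : ∀ j ω, X j ω ∈ Set.Icc (0 : ℝ) 1)
    (hXindep : iIndepFun X P)
    (hXmean : ∀ j, ∫ ω, X j ω ∂P = μ)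
    (hks : 1 ≤ ks) (hke : ks ≤ ke)
    (hNrange : ∀ ω, N ω ∈ Set.Icc ks ke) :
    P {ω | (∑ j ∈ Finset.range (N ω), X j ω) / (N ω) - μ ≥
        2 * Real.sqrt (Real.log T / (N ω))} ≤
      ENNReal.ofReal (((ke : ℝ) - (ks : ℝ) + 1) / (T : ℝ) ^ 2) := by
  have hT' : (1 : ℝ) ≤ T := by exact_mod_cast (show 1 ≤ T by omega)
  calc _ ≤ ∑ n ∈ Finset.Icc ks ke,
        P {ω | 2 * √(Real.log T / n) ≤ (∑ j ∈ Finset.range n, X j ω) / n - μ} :=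
        measure_setOf_at_index_le_sum P (fun ω => Finset.mem_Icc.mpr (hNrange ω)) _
    _ ≤ ∑ _n ∈ Finset.Icc ks ke, ENNReal.ofReal (1 / (T : ℝ) ^ 2) :=
        Finset.sum_le_sum fun n hn => measure_two_mul_sqrt_log_le_empiricalMean_sub_le
          hXmeas hXrange hXindep hXmean (hks.trans (Finset.mem_Icc.mp hn).1) hT'
    _ = ENNReal.ofReal (((ke : ℝ) - (ks : ℝ) + 1) / (T : ℝ) ^ 2) := by
        rw [Finset.sum_const, Nat.card_Icc, nsmul_eq_mul, ← ENNReal.ofReal_natCast,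
          ← ENNReal.ofReal_mul (by positivity), Nat.cast_sub (by omega)]
        push_cast
        ring_nf

/-- Let `T ≥ 2`, let `X 0, X 1, …` be i.i.d. `[0,1]`-valued
random variables with mean `μ` (the sample `X j` being the `(j+1)`-st sample),
and let `N` be any random variable taking values in the integer interval
`{ks, …, ke}` with `1 ≤ ks ≤ ke` (with arbitrary dependence on the `X j`).
Then `P( (1/N)·∑_{j=1}^{N} X_j - μ ≥ 2·√(ln T / N) ) ≤ (ke - ks + 1)/T²`. -/
theorem random_index_hoeffding_upper (Ω : Type) [MeasurableSpace Ω]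
    (P : Measure Ω) [IsProbabilityMeasure P] (T : ℕ) (X : ℕ → Ω → ℝ) (μ : ℝ)
    (N : Ω → ℕ) (ks ke : ℕ)
    (hT : 2 ≤ T)
    (hXmeas : ∀ j, Measurable (X j))
    (hXrange : ∀ j ω, X j ω ∈ Set.Icc (0 : ℝ) 1)
    (hXindep : iIndepFun X P)
    (hXident : ∀ j, Measure.map (X j) P = Measure.map (X 0) P)
    (hXmean : ∀ j, ∫ ω, X j ω ∂P = μ)
    (hNmeas : Measurable N)
    (hks : 1 ≤ ks) (hke : ks ≤ ke)
    (hNrange : ∀ ω, N ω ∈ Set.Icc ks ke) :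
    P {ω | (∑ j ∈ Finset.range (N ω), X j ω) / (N ω) - μ ≥
        2 * Real.sqrt (Real.log T / (N ω))} ≤
      ENNReal.ofReal (((ke : ℝ) - (ks : ℝ) + 1) / (T : ℝ) ^ 2) :=
  random_index_hoeffding_upper_general Ω P T X μ N ks ke hT hXmeas hXrange hXindep hXmean hks hke
    hNrange
end

section
/- For the stochastic-rate-constrained UCB algorithm there exists an absolute constant C > 0 (independent of K, T, v, and the reward distributions) such that for every arm i with Δ_i > 0: E[n_T(i)] ≤ min{ 16·ln T / Δ_i² + (1 − K·v) , (1 − K·v)·T } + v·T + C. -/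
open MeasureTheory ProbabilityTheory Finset

namespace FairBandit

variable {Ω : Type} [MeasurableSpace Ω]

/-- Index type for the joint family consisting of all samples of all arms
together with the randomization seeds of rounds `K+1, K+2, …`. -/
def jointβ (K : ℕ) : (Fin K × ℕ) ⊕ ℕ → Type := fun idx =>
  match idx with
  | .inl _ => ℝ
  | .inr _ => Fin (K + 1)

/-- The (discrete/Borel) measurable structure on the joint family. -/
def jointMS (K : ℕ) : ∀ idx, MeasurableSpace (jointβ K idx) := fun idx =>
  match idx with
  | .inl _ => (inferInstance : MeasurableSpace ℝ)
  | .inr _ => (inferInstance : MeasurableSpace (Fin (K + 1)))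

/-- The joint family: sample `X i k` at index `.inl (i, k)` and the
randomization seed `ξ t` of round `t = K + 1 + u > K` at index `.inr u`. -/
def jointF {K : ℕ} (X : Fin K → ℕ → Ω → ℝ) (ξ : ℕ → Ω → Fin (K + 1)) :
    ∀ idx, Ω → jointβ K idx := fun idx =>
  match idx with
  | .inl p => X p.1 p.2
  | .inr u => ξ (K + 1 + u)

/-- The stochastic bandit environment: for every arm `i` the samples
`X i 0, X i 1, …` take values in `[0,1]`, the samples of each arm are
identically distributed, and the mean of every sample of arm `i` is `μ i`.
(Joint independence is required separately, together with the seeds.) -/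
def BanditEnvNoIndep {K : ℕ} (P : Measure Ω) (X : Fin K → ℕ → Ω → ℝ) (μ : Fin K → ℝ) : Prop :=
  (∀ i k, Measurable (X i k)) ∧
  (∀ i k ω, X i k ω ∈ Set.Icc (0 : ℝ) 1) ∧
  (∀ i k, Measure.map (X i k) P = Measure.map (X i 0) P) ∧
  (∀ i k, ∫ ω, X i k ω ∂P = μ i)

/-- The stochastic-rate-constrained UCB algorithm: rounds `1, …, K` pull each
arm once; at every round `t > K`, the arm `b t` is a maximizer of the UCB
index (ties broken by smallest index), and the pulled arm is `b t` if the
seed `ξ t` equals `K`, and the arm `ξ t` otherwise, where the seed takes the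
value `K` with probability `1 - K·v` and each value `i < K` with probability
`v` (so that a uniformly random arm is pulled with probability `K·v`),
independently of everything else (i.e. of all samples and all other seeds). -/
def StochUCB {K : ℕ} (T : ℕ) (v : ℝ) (P : Measure Ω) (X : Fin K → ℕ → Ω → ℝ)
    (ξ : ℕ → Ω → Fin (K + 1)) (b arm : ℕ → Ω → Fin K) : Prop :=
  (∀ t, Measurable (arm t)) ∧ (∀ t, Measurable (b t)) ∧ (∀ t, Measurable (ξ t)) ∧
  (∀ t ω, 1 ≤ t → t ≤ K → ((arm t ω : ℕ) = t - 1)) ∧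
  (∀ t ω, K < t →
    (∀ j, ucb T X arm j t ω ≤ ucb T X arm (b t ω) t ω) ∧
    (∀ j, ucb T X arm j t ω = ucb T X arm (b t ω) t ω → b t ω ≤ j)) ∧
  (∀ t ω, K < t →
    arm t ω = if h : ((ξ t ω : ℕ) < K) then ⟨(ξ t ω : ℕ), h⟩ else b t ω) ∧
  (∀ t, K < t → ∀ j : Fin (K + 1),
    P {ω | ξ t ω = j} = ENNReal.ofReal (if (j : ℕ) < K then v else 1 - (K : ℝ) * v)) ∧
  iIndepFun (m := jointMS K) (jointF X ξ) P

/-- The benchmark distribution `p*` over arms: `p*(i*) = 1 - K·v + v` and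
`p*(i) = v` otherwise. -/
noncomputable def pstar {K : ℕ} (v : ℝ) (istar : Fin K) (i : Fin K) : ℝ :=
  v + (1 - (K : ℝ) * v) * (if i = istar then 1 else 0)

/-- The conditional distribution `p_t` of the pulled arm at round `t` given the
history: `p_t(b_t) = 1 - K·v + v` and `p_t(i) = v` otherwise. -/
noncomputable def pt {K : ℕ} (v : ℝ) (b : ℕ → Ω → Fin K) (t : ℕ) (ω : Ω) (i : Fin K) : ℝ :=
  v + (1 - (K : ℝ) * v) * (if i = b t ω then 1 else 0)

end FairBandit

/-!
After the round-robin start, every pull of a suboptimal arm `i` at a round `t > K` is either an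
exploration pull (the seed names `i`, probability `v`) or a greedy pull (the seed is `K`,
probability `1 - K v`), so `E n_T(i) ≤ 1 + v T + E[#greedy pulls of i]`, and the greedy pulls
are at most the `(1 - K v) T` expected greedy rounds.

For the logarithmic bound, Hoeffding's inequality and a union bound over the sample sizes
`n ≤ T` show that, outside an event of probability at most `2 / T`, every prefix average of arm
`i` lies below `μ i + 2 √(log T / n)` and every prefix average of `istar` above
`μ istar - 2 √(log T / n)`. There the index of `istar` exceeds `μ istar` and the index of `i`
is below `μ i + 4 √(log T / n_{t-1}(i))`, so a greedy pull of `i` forces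
`n_{t-1}(i) < 16 log T / Δ²`. As `n_{t-1}(i)` strictly increases along the pulls of `i`, there
are at most `⌈16 log T / Δ²⌉` of them; the exceptional event costs at most `T · 2 / T = 2`.
-/

namespace FairBandit

open Real

section Counting

variable {Ω : Type} {K : ℕ} {arm : ℕ → Ω → Fin K} {i : Fin K} {ω : Ω}

lemma pullCount_le_self (t : ℕ) : pullCount arm i t ω ≤ t :=
  (card_filter_le _ _).trans (by simp)

lemma pullCount_mono {t t' : ℕ} (h : t ≤ t') : pullCount arm i t ω ≤ pullCount arm i t' ω :=
  card_le_card (filter_subset_filter _ (Icc_subset_Icc_right h))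

lemma pullCount_eq_pullCount_pred_add_one {t : ℕ} (ht : 1 ≤ t) (h : arm t ω = i) :
    pullCount arm i t ω = pullCount arm i (t - 1) ω + 1 := by
  obtain ⟨s, rfl⟩ : ∃ s, t = s + 1 := ⟨t - 1, by omega⟩
  have hIcc : Icc 1 (s + 1) = insert (s + 1) (Icc 1 s) :=
    (insert_Icc_right_eq_Icc_succ (by simp)).symm
  rw [pullCount, pullCount, Nat.add_sub_cancel, hIcc, filter_insert, if_pos h,
    card_insert_of_notMem (by simp)]

lemma strictMonoOn_pullCount_pred :
    StrictMonoOn (fun t => pullCount arm i (t - 1) ω) {t | 1 ≤ t ∧ arm t ω = i} := by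
  rintro t ⟨ht, harm⟩ t' - htt'
  calc pullCount arm i (t - 1) ω < pullCount arm i t ω := by
        rw [pullCount_eq_pullCount_pred_add_one ht harm]; omega
    _ ≤ pullCount arm i (t' - 1) ω := pullCount_mono (by omega)

lemma card_filter_arm_eq_le {s : Finset ℕ} (hs : ∀ t ∈ s, 1 ≤ t) {u : ℕ}
    (hu : ∀ t ∈ s, arm t ω = i → pullCount arm i (t - 1) ω < u) :
    (s.filter (arm · ω = i)).card ≤ u := by
  refine (card_le_card_of_injOn (t := range u) (fun t => pullCount arm i (t - 1) ω) ?_ ?_).trans_eq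
    (card_range u)
  · intro t ht
    obtain ⟨hts, harm⟩ := mem_filter.1 (mem_coe.1 ht)
    exact mem_coe.2 (mem_range.2 (hu t hts harm))
  · refine strictMonoOn_pullCount_pred.injOn.mono fun t ht => ?_
    obtain ⟨hts, harm⟩ := mem_filter.1 (mem_coe.1 ht)
    exact ⟨hs t hts, harm⟩

variable (hinit : ∀ t, 1 ≤ t → t ≤ K → (arm t ω : ℕ) = t - 1)
include hinit

lemma pullCount_eq_one_of_roundRobin : pullCount arm i K ω = 1 := by
  rw [pullCount, card_eq_one]
  refine ⟨(i : ℕ) + 1, ?_⟩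
  ext t
  simp only [mem_filter, mem_Icc, mem_singleton]
  constructor
  · rintro ⟨⟨h1, h2⟩, rfl⟩
    have := hinit t h1 h2
    omega
  · rintro rfl
    have := hinit ((i : ℕ) + 1) (by omega) (by omega)
    exact ⟨⟨by omega, by omega⟩, Fin.ext (by omega)⟩

lemma one_le_pullCount_of_roundRobin {t : ℕ} (ht : K ≤ t) : 1 ≤ pullCount arm i t ω :=
  (pullCount_eq_one_of_roundRobin hinit).symm.le.trans (pullCount_mono ht)

end Counting

section Decomposition

variable {Ω : Type} {K : ℕ}

def explorePulls (T : ℕ) (ξ : ℕ → Ω → Fin (K + 1)) (i : Fin K) (ω : Ω) : Finset ℕ :=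
  (Icc (K + 1) T).filter (ξ · ω = i.castSucc)

def greedyPulls (T : ℕ) (ξ : ℕ → Ω → Fin (K + 1)) (arm : ℕ → Ω → Fin K) (i : Fin K) (ω : Ω) :
    Finset ℕ :=
  (Icc (K + 1) T).filter (fun t => ξ t ω = Fin.last K ∧ arm t ω = i)

variable {T : ℕ} {ξ : ℕ → Ω → Fin (K + 1)} {b arm : ℕ → Ω → Fin K} {i : Fin K} {ω : Ω}

lemma card_Icc_succ_le (K T : ℕ) : (Icc (K + 1) T).card ≤ T := by
  rw [Nat.card_Icc]
  omega

lemma card_greedyPulls_le_self : (greedyPulls T ξ arm i ω).card ≤ T :=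
  (card_filter_le _ _).trans (card_Icc_succ_le K T)

lemma pullCount_le_one_add_explorePulls_add_greedyPulls (hKT : K ≤ T)
    (hinit : ∀ t, 1 ≤ t → t ≤ K → (arm t ω : ℕ) = t - 1)
    (hpull : ∀ t, K < t → arm t ω = if h : (ξ t ω : ℕ) < K then ⟨ξ t ω, h⟩ else b t ω) :
    pullCount arm i T ω ≤ 1 + (explorePulls T ξ i ω).card + (greedyPulls T ξ arm i ω).card := by
  have hIcc : Icc 1 T = Icc 1 K ∪ Icc (K + 1) T := by
    ext t; simp only [mem_Icc, mem_union]; omega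
  have hlate : (Icc (K + 1) T).filter (arm · ω = i) ⊆
      explorePulls T ξ i ω ∪ greedyPulls T ξ arm i ω := by
    intro t ht
    obtain ⟨htI, harm⟩ := mem_filter.1 ht
    have hpt := hpull t (by simp only [mem_Icc] at htI; omega)
    simp only [explorePulls, greedyPulls, mem_union, mem_filter]
    by_cases hexp : (ξ t ω : ℕ) < K
    · rw [dif_pos hexp] at hpt
      exact Or.inl ⟨htI, Fin.ext (by simp [← harm, hpt])⟩
    · exact Or.inr ⟨htI, Fin.ext (by simp only [Fin.val_last]; omega), harm⟩
  calc pullCount arm i T ω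
      ≤ pullCount arm i K ω + ((Icc (K + 1) T).filter (arm · ω = i)).card := by
        rw [pullCount, pullCount, hIcc, filter_union]
        exact card_union_le _ _
    _ ≤ 1 + (explorePulls T ξ i ω ∪ greedyPulls T ξ arm i ω).card := by
        rw [pullCount_eq_one_of_roundRobin hinit]
        exact Nat.add_le_add_left (card_le_card hlate) 1
    _ ≤ _ := by rw [add_assoc]; exact Nat.add_le_add_left (card_union_le _ _) 1

end Decomposition

section Confidence

variable {Ω : Type}

def largeDeviation (T : ℕ) (Y : ℕ → Ω → ℝ) : Set Ω :=
  ⋃ n ∈ Icc 1 T, {ω | n * (2 * √(log T / n)) ≤ ∑ k ∈ range n, Y k ω}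

lemma sum_lt_of_notMem_largeDeviation {T : ℕ} {Y : ℕ → Ω → ℝ} {ω : Ω}
    (hω : ω ∉ largeDeviation T Y) {n : ℕ} (hn : 1 ≤ n) (hnT : n ≤ T) :
    ∑ k ∈ range n, Y k ω < n * (2 * √(log T / n)) := by
  by_contra! h
  exact hω (Set.mem_biUnion (mem_Icc.2 ⟨hn, hnT⟩) h)

lemma lt_div_sq_of_lt_four_mul_sqrt_div {L Δ n : ℝ} (hΔ : 0 < Δ) (hn : 0 < n)
    (h : Δ < 4 * √(L / n)) :
    n < 16 * L / Δ ^ 2 := by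
  have hL : 0 < L / n := by
    by_contra! hL
    rw [Real.sqrt_eq_zero'.2 hL] at h
    linarith
  have hsq : Δ ^ 2 < 16 * (L / n) := by
    calc Δ ^ 2 < (4 * √(L / n)) ^ 2 := by gcongr
      _ = 16 * (L / n) := by rw [mul_pow, Real.sq_sqrt hL.le]; norm_num
  rw [lt_div_iff₀ (by positivity)]
  rw [mul_div_assoc', lt_div_iff₀ hn] at hsq
  linarith

variable {K T : ℕ} {X : Fin K → ℕ → Ω → ℝ} {μ : Fin K → ℝ} {arm : ℕ → Ω → Fin K} {ω : Ω}
  {t : ℕ}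

lemma ucb_lt_of_notMem_largeDeviation {i : Fin K}
    (hω : ω ∉ largeDeviation T (fun k ω => X i k ω - μ i))
    (hn : 1 ≤ pullCount arm i (t - 1) ω) (hnT : pullCount arm i (t - 1) ω ≤ T) :
    ucb T X arm i t ω < μ i + 4 * √(log T / pullCount arm i (t - 1) ω) := by
  have hn0 : (0 : ℝ) < pullCount arm i (t - 1) ω := by exact_mod_cast hn
  have h := sum_lt_of_notMem_largeDeviation hω hn hnT
  rw [sum_sub_distrib, sum_const, card_range, nsmul_eq_mul] at h
  have hmean : empMean X arm i t ω < μ i + 2 * √(log T / pullCount arm i (t - 1) ω) := by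
    rw [empMean, div_lt_iff₀ hn0]
    linarith
  rw [ucb]
  linarith

lemma lt_ucb_of_notMem_largeDeviation {i : Fin K}
    (hω : ω ∉ largeDeviation T (fun k ω => μ i - X i k ω))
    (hn : 1 ≤ pullCount arm i (t - 1) ω) (hnT : pullCount arm i (t - 1) ω ≤ T) :
    μ i < ucb T X arm i t ω := by
  have hn0 : (0 : ℝ) < pullCount arm i (t - 1) ω := by exact_mod_cast hn
  have h := sum_lt_of_notMem_largeDeviation hω hn hnT
  rw [sum_sub_distrib, sum_const, card_range, nsmul_eq_mul] at h
  have hmean : μ i - 2 * √(log T / pullCount arm i (t - 1) ω) < empMean X arm i t ω := by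
    rw [empMean, lt_div_iff₀ hn0]
    linarith
  rw [ucb]
  linarith

lemma pullCount_lt_of_ucb_le {istar i : Fin K} (hΔ : 0 < μ istar - μ i)
    (hinit : ∀ s, 1 ≤ s → s ≤ K → (arm s ω : ℕ) = s - 1) (hKt : K < t) (htT : t ≤ T)
    (hi : ω ∉ largeDeviation T (fun k ω => X i k ω - μ i))
    (hstar : ω ∉ largeDeviation T (fun k ω => μ istar - X istar k ω))
    (hle : ucb T X arm istar t ω ≤ ucb T X arm i t ω) :
    (pullCount arm i (t - 1) ω : ℝ) < 16 * log T / (μ istar - μ i) ^ 2 := by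
  have hupper := ucb_lt_of_notMem_largeDeviation (t := t) hi
    (one_le_pullCount_of_roundRobin hinit (by omega)) ((pullCount_le_self _).trans (by omega))
  have hlower := lt_ucb_of_notMem_largeDeviation (t := t) hstar
    (one_le_pullCount_of_roundRobin hinit (by omega)) ((pullCount_le_self _).trans (by omega))
  refine lt_div_sq_of_lt_four_mul_sqrt_div hΔ ?_ (by linarith)
  exact_mod_cast one_le_pullCount_of_roundRobin hinit (by omega)

lemma card_greedyPulls_le_of_notMem_largeDeviation {ξ : ℕ → Ω → Fin (K + 1)}
    {b : ℕ → Ω → Fin K} {istar i : Fin K} (hΔ : 0 < μ istar - μ i)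
    (hinit : ∀ s, 1 ≤ s → s ≤ K → (arm s ω : ℕ) = s - 1)
    (hmax : ∀ s, K < s → ∀ j, ucb T X arm j s ω ≤ ucb T X arm (b s ω) s ω)
    (hpull : ∀ s, K < s → arm s ω = if h : (ξ s ω : ℕ) < K then ⟨ξ s ω, h⟩ else b s ω)
    (hi : ω ∉ largeDeviation T (fun k ω => X i k ω - μ i))
    (hstar : ω ∉ largeDeviation T (fun k ω => μ istar - X istar k ω)) :
    (greedyPulls T ξ arm i ω).card ≤ ⌈16 * log T / (μ istar - μ i) ^ 2⌉₊ := by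
  rw [greedyPulls, ← filter_filter]
  refine card_filter_arm_eq_le (fun s hs => ?_) fun s hs harm => ?_
  · have := (mem_Icc.1 (mem_filter.1 hs).1).1
    omega
  obtain ⟨hsI, hξ⟩ := mem_filter.1 hs
  rw [mem_Icc] at hsI
  have hb : b s ω = i := by
    rw [← harm, hpull s (by omega), dif_neg (by simp [hξ])]
  have hle := hmax s (by omega) istar
  rw [hb] at hle
  exact Nat.lt_ceil.2 (pullCount_lt_of_ucb_le hΔ hinit (by omega) hsI.2 hi hstar hle)

end Confidence

lemma card_filter_eq_sum_indicator {Ω : Type} (s : Finset ℕ) (p : ℕ → Ω → Prop)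
    [∀ t ω, Decidable (p t ω)] (ω : Ω) :
    ((s.filter (p · ω)).card : ℝ) = ∑ t ∈ s, {ω | p t ω}.indicator 1 ω := by
  rw [card_filter, Nat.cast_sum]
  refine sum_congr rfl fun t _ => ?_
  by_cases h : p t ω <;> simp [h]

section FiniteMeasure

variable {Ω : Type} [MeasurableSpace Ω] {P : Measure Ω} [IsFiniteMeasure P]

variable {s : Finset ℕ} {p : ℕ → Ω → Prop} [∀ t ω, Decidable (p t ω)]

lemma integrable_card_filter (hp : ∀ t, MeasurableSet {ω | p t ω}) :
    Integrable (fun ω => ((s.filter (p · ω)).card : ℝ)) P := by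
  simp_rw [card_filter_eq_sum_indicator]
  exact integrable_finsetSum _ fun t _ => (integrable_const 1).indicator (hp t)

lemma integral_card_filter_le (hp : ∀ t, MeasurableSet {ω | p t ω}) {a : ℝ}
    (ha : ∀ t ∈ s, P.real {ω | p t ω} ≤ a) :
    ∫ ω, ((s.filter (p · ω)).card : ℝ) ∂P ≤ s.card * a := by
  simp_rw [card_filter_eq_sum_indicator]
  rw [integral_finsetSum _ fun t _ => (integrable_const 1).indicator (hp t)]
  simp_rw [integral_indicator_one (hp _)]
  simpa using sum_le_sum ha

end FiniteMeasure

section Probability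

variable {Ω : Type} [MeasurableSpace Ω] {P : Measure Ω} [IsProbabilityMeasure P]

lemma measureReal_sum_range_sub_ge_le_of_mem_Icc {Z : ℕ → Ω → ℝ} {m : ℝ} (hind : iIndepFun Z P)
    (hmeas : ∀ k, Measurable (Z k)) (hZ : ∀ k ω, Z k ω ∈ Set.Icc (0 : ℝ) 1)
    (hmean : ∀ k, ∫ ω, Z k ω ∂P = m) (n : ℕ) {ε : ℝ} (hε : 0 ≤ ε) :
    P.real {ω | ε ≤ ∑ k ∈ range n, (Z k ω - m)} ≤ exp (-2 * ε ^ 2 / n) := by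
  have hsubG : ∀ k < n, HasSubgaussianMGF (fun ω => Z k ω - m) ((‖(1 : ℝ) - 0‖₊ / 2) ^ 2) P := by
    intro k _
    simpa only [hmean k] using
      hasSubgaussianMGF_of_mem_Icc (μ := P) (hmeas k).aemeasurable (ae_of_all _ (hZ k))
  have hind' : iIndepFun (fun k ω => Z k ω - m) P :=
    hind.comp (fun _ z => z - m) fun _ => measurable_id.sub_const m
  refine (HasSubgaussianMGF.measure_sum_range_ge_le_of_iIndepFun hind' hsubG hε).trans_eq ?_
  congr 1
  norm_num
  ring

lemma measurableSet_largeDeviation {T : ℕ} {Y : ℕ → Ω → ℝ} (hY : ∀ k, Measurable (Y k)) :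
    MeasurableSet (largeDeviation T Y) :=
  .biUnion (Set.to_countable _) fun _ _ =>
    measurableSet_le measurable_const (Finset.measurable_sum _ fun k _ => hY k)

/-- The width `2√(log T / n)` makes each of the `T` Hoeffding bounds `T⁻⁸`. -/
lemma measureReal_largeDeviation_le {Z : ℕ → Ω → ℝ} {m : ℝ} (hind : iIndepFun Z P)
    (hmeas : ∀ k, Measurable (Z k)) (hZ : ∀ k ω, Z k ω ∈ Set.Icc (0 : ℝ) 1)
    (hmean : ∀ k, ∫ ω, Z k ω ∂P = m) {T : ℕ} (hT : 1 ≤ T) :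
    P.real (largeDeviation T fun k ω => Z k ω - m) ≤ 1 / T := by
  have hT0 : (0 : ℝ) < T := by exact_mod_cast hT
  calc P.real (largeDeviation T fun k ω => Z k ω - m)
      ≤ ∑ n ∈ Icc 1 T, exp (-2 * (n * (2 * √(log T / n))) ^ 2 / n) :=
        (measureReal_biUnion_finset_le _ _).trans <| sum_le_sum fun n _ =>
          measureReal_sum_range_sub_ge_le_of_mem_Icc hind hmeas hZ hmean n (by positivity)
    _ = T * exp (-(8 * log T)) := by
        have hexponent : ∀ n ∈ Icc 1 T,
            -2 * (n * (2 * √(log T / n))) ^ 2 / n = -(8 * log T) := by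
          intro n hn
          have hn0 : (0 : ℝ) < n := by exact_mod_cast (mem_Icc.1 hn).1
          rw [mul_pow, mul_pow, Real.sq_sqrt (by positivity)]
          field_simp
          ring
        rw [sum_congr rfl fun n hn => congrArg exp (hexponent n hn), sum_const, Nat.card_Icc,
          Nat.add_sub_cancel, nsmul_eq_mul]
    _ = (T ^ 7 : ℝ)⁻¹ := by
        rw [show 8 * log (T : ℝ) = log ((T : ℝ) ^ 8) by rw [Real.log_pow]; norm_num,
          Real.exp_neg, Real.exp_log (by positivity)]
        field_simp
    _ ≤ 1 / T := by
        rw [one_div]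
        exact inv_anti₀ hT0 (le_self_pow₀ (by exact_mod_cast hT) (by norm_num))

lemma measureReal_largeDeviation_sub_le {Z : ℕ → Ω → ℝ} {m : ℝ} (hind : iIndepFun Z P)
    (hmeas : ∀ k, Measurable (Z k)) (hZ : ∀ k ω, Z k ω ∈ Set.Icc (0 : ℝ) 1)
    (hmean : ∀ k, ∫ ω, Z k ω ∂P = m) {T : ℕ} (hT : 1 ≤ T) :
    P.real (largeDeviation T fun k ω => m - Z k ω) ≤ 1 / T := by
  have hflip : (fun k ω => m - Z k ω) = fun k ω => (1 - Z k ω) - (1 - m) := by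
    funext k ω; ring
  rw [hflip]
  refine measureReal_largeDeviation_le (hind.comp (fun _ z => 1 - z) fun _ => by fun_prop)
    (fun k => (hmeas k).const_sub 1) (fun k ω => ?_) (fun k => ?_) hT
  · obtain ⟨h0, h1⟩ := hZ k ω
    show 1 - Z k ω ∈ Set.Icc 0 1
    constructor <;> linarith
  · have hint : Integrable (Z k) P :=
      .of_mem_Icc 0 1 (hmeas k).aemeasurable (ae_of_all _ (hZ k))
    show ∫ ω, 1 - Z k ω ∂P = 1 - m
    rw [integral_sub (integrable_const 1) hint, hmean k]
    simp

lemma integral_le_add_mul_measureReal {f : Ω → ℝ} (hf : Integrable f P) {B : Set Ω}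
    (hB : MeasurableSet B) {u M : ℝ} (hu : 0 ≤ u) (hfM : ∀ ω, f ω ≤ M) (hfu : ∀ ω ∉ B, f ω ≤ u) :
    ∫ ω, f ω ∂P ≤ u + M * P.real B := by
  have hle : ∀ ω, f ω ≤ u + B.indicator (fun _ => M) ω := by
    intro ω
    by_cases hω : ω ∈ B
    · rw [Set.indicator_of_mem hω]; linarith [hfM ω]
    · rw [Set.indicator_of_notMem hω]; linarith [hfu ω hω]
  have hint : Integrable (fun ω => u + B.indicator (fun _ => M) ω) P :=
    (integrable_const u).add ((integrable_const M).indicator hB)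
  refine (integral_mono hf hint hle).trans_eq ?_
  rw [integral_add (integrable_const u) ((integrable_const M).indicator hB),
    integral_indicator_const M hB]
  simp [mul_comm]

end Probability

section Algorithm

variable {Ω : Type} [MeasurableSpace Ω] {P : Measure Ω} [IsProbabilityMeasure P]

variable {K T : ℕ} {v : ℝ} {X : Fin K → ℕ → Ω → ℝ} {μ : Fin K → ℝ}
  {ξ : ℕ → Ω → Fin (K + 1)} {b arm : ℕ → Ω → Fin K}

lemma integral_card_explorePulls_le (halg : StochUCB T v P X ξ b arm) (hv : 0 ≤ v) (i : Fin K) :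
    ∫ ω, ((explorePulls T ξ i ω).card : ℝ) ∂P ≤ v * T := by
  obtain ⟨-, -, hξm, -, -, -, hseed, -⟩ := halg
  have hseed_i : ∀ t ∈ Icc (K + 1) T, P.real {ω | ξ t ω = i.castSucc} ≤ v := by
    intro t ht
    rw [measureReal_def, hseed t (by simp only [mem_Icc] at ht; omega), if_pos (by simp),
      ENNReal.toReal_ofReal hv]
  calc ∫ ω, ((explorePulls T ξ i ω).card : ℝ) ∂P ≤ (Icc (K + 1) T).card * v :=
        integral_card_filter_le (fun t => hξm t (measurableSet_singleton _)) hseed_i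
    _ ≤ v * T := by rw [mul_comm]; gcongr; exact card_Icc_succ_le K T

lemma integral_card_greedyPulls_le_mul (halg : StochUCB T v P X ξ b arm) (hKv : K * v ≤ 1)
    (i : Fin K) :
    ∫ ω, ((greedyPulls T ξ arm i ω).card : ℝ) ∂P ≤ (1 - K * v) * T := by
  obtain ⟨harmm, -, hξm, -, -, -, hseed, -⟩ := halg
  have hseed_last : ∀ t ∈ Icc (K + 1) T,
      P.real {ω | ξ t ω = Fin.last K ∧ arm t ω = i} ≤ 1 - K * v := by
    intro t ht
    refine (measureReal_mono (s₂ := {ω | ξ t ω = Fin.last K}) fun ω hω => hω.1).trans_eq ?_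
    rw [measureReal_def, hseed t (by simp only [mem_Icc] at ht; omega) (Fin.last K),
      if_neg (by simp), ENNReal.toReal_ofReal (by linarith)]
  calc ∫ ω, ((greedyPulls T ξ arm i ω).card : ℝ) ∂P ≤ (Icc (K + 1) T).card * (1 - K * v) :=
        integral_card_filter_le (p := fun t ω => ξ t ω = Fin.last K ∧ arm t ω = i)
          (fun t => (hξm t (measurableSet_singleton _)).inter
          (harmm t (measurableSet_singleton _))) hseed_last
    _ ≤ (1 - K * v) * T := by
        rw [mul_comm]
        exact mul_le_mul_of_nonneg_left (by exact_mod_cast card_Icc_succ_le K T) (by linarith)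

lemma integral_card_greedyPulls_le_log (henv : BanditEnvNoIndep P X μ)
    (halg : StochUCB T v P X ξ b arm) (hT : 1 ≤ T) {istar i : Fin K} (hΔ : 0 < μ istar - μ i) :
    ∫ ω, ((greedyPulls T ξ arm i ω).card : ℝ) ∂P ≤ 16 * log T / (μ istar - μ i) ^ 2 + 3 := by
  obtain ⟨hXm, hXb, -, hXmean⟩ := henv
  obtain ⟨harmm, -, hξm, hinit, hmax, hpull, -, hindep⟩ := halg
  have hXind : ∀ j, iIndepFun (X j) P := fun j =>
    hindep.precomp (g := fun k => Sum.inl (j, k)) fun k k' h => by simpa using h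
  set B := largeDeviation T (fun k ω => X i k ω - μ i) ∪
    largeDeviation T (fun k ω => μ istar - X istar k ω)
  have hBm : MeasurableSet B :=
    (measurableSet_largeDeviation fun k => (hXm i k).sub_const _).union
      (measurableSet_largeDeviation fun k => (hXm istar k).const_sub _)
  have hPB : (T : ℝ) * P.real B ≤ 2 := by
    have hT0 : (0 : ℝ) < T := by exact_mod_cast hT
    have := (measureReal_union_le (μ := P) _ _).trans (add_le_add
      (measureReal_largeDeviation_le (hXind i) (hXm i) (hXb i) (hXmean i) hT)
      (measureReal_largeDeviation_sub_le (hXind istar) (hXm istar) (hXb istar) (hXmean istar) hT))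
    calc (T : ℝ) * P.real B ≤ T * (1 / T + 1 / T) := by gcongr
      _ = 2 := by field_simp; ring
  have hint : Integrable (fun ω => ((greedyPulls T ξ arm i ω).card : ℝ)) P :=
    integrable_card_filter (p := fun t ω => ξ t ω = Fin.last K ∧ arm t ω = i)
      fun t => (hξm t (measurableSet_singleton _)).inter (harmm t (measurableSet_singleton _))
  have hle := integral_le_add_mul_measureReal hint hBm (Nat.cast_nonneg _)
    (M := T) (fun ω => by exact_mod_cast card_greedyPulls_le_self (ξ := ξ) (arm := arm) (i := i))
    fun ω hω => by
      rw [Set.mem_union, not_or] at hω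
      exact_mod_cast card_greedyPulls_le_of_notMem_largeDeviation hΔ (hinit · ω)
        (fun s hs => (hmax s ω hs).1) (hpull · ω) hω.1 hω.2
  have hceil := Nat.ceil_lt_add_one (a := 16 * log T / (μ istar - μ i) ^ 2) (by positivity)
  linarith

lemma integral_pullCount_le (halg : StochUCB T v P X ξ b arm) (hKT : K ≤ T) (i : Fin K) :
    ∫ ω, (pullCount arm i T ω : ℝ) ∂P ≤
      1 + ∫ ω, ((explorePulls T ξ i ω).card : ℝ) ∂P +
        ∫ ω, ((greedyPulls T ξ arm i ω).card : ℝ) ∂P := by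
  obtain ⟨harmm, -, hξm, hinit, -, hpull, -, -⟩ := halg
  have hexplore : Integrable (fun ω => ((explorePulls T ξ i ω).card : ℝ)) P :=
    integrable_card_filter fun t => hξm t (measurableSet_singleton _)
  have hgreedy : Integrable (fun ω => ((greedyPulls T ξ arm i ω).card : ℝ)) P :=
    integrable_card_filter (p := fun t ω => ξ t ω = Fin.last K ∧ arm t ω = i)
      fun t => (hξm t (measurableSet_singleton _)).inter (harmm t (measurableSet_singleton _))
  have hpullCount : Integrable (fun ω => (pullCount arm i T ω : ℝ)) P :=
    integrable_card_filter (p := fun t ω => arm t ω = i)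
      fun t => harmm t (measurableSet_singleton _)
  have hone_explore : Integrable (fun ω => 1 + ((explorePulls T ξ i ω).card : ℝ)) P :=
    (integrable_const 1).add hexplore
  calc ∫ ω, (pullCount arm i T ω : ℝ) ∂P
      ≤ ∫ ω, (1 + ((explorePulls T ξ i ω).card : ℝ) + (greedyPulls T ξ arm i ω).card) ∂P :=
        integral_mono hpullCount (hone_explore.add hgreedy) fun ω => by
          dsimp only
          exact_mod_cast pullCount_le_one_add_explorePulls_add_greedyPulls (i := i) hKT
            (hinit · ω) (hpull · ω)
    _ = _ := by
        rw [integral_add hone_explore hgreedy,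
          integral_add (integrable_const 1) hexplore]
        simp

end Algorithm

end FairBandit

open FairBandit MeasureTheory ProbabilityTheory

/-- For the stochastic-rate-constrained UCB algorithm there
is an absolute constant `C > 0` such that for every arm `i` with `Δ_i > 0`:
`E[n_T(i)] ≤ min{ 16 ln T / Δ_i² + (1-Kv) , (1-Kv)·T } + v·T + C`. -/
theorem stoch_ucb_pull_count_bound :
    ∃ C : ℝ, 0 < C ∧
      ∀ (Ω : Type) (_ : MeasurableSpace Ω) (P : Measure Ω), IsProbabilityMeasure P →
      ∀ (K T : ℕ) (v : ℝ) (X : Fin K → ℕ → Ω → ℝ) (μ : Fin K → ℝ) (istar : Fin K)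
        (ξ : ℕ → Ω → Fin (K + 1)) (b arm : ℕ → Ω → Fin K),
        2 ≤ K → max K 2 ≤ T → 0 < v → v ≤ 1 / (K : ℝ) →
        BanditEnvNoIndep P X μ → StochUCB T v P X ξ b arm →
        (∀ j, μ j ≤ μ istar) →
        ∀ i : Fin K, 0 < μ istar - μ i →
          (∫ ω, (pullCount arm i T ω : ℝ) ∂P) ≤
            min (16 * Real.log T / (μ istar - μ i) ^ 2 + (1 - (K : ℝ) * v))
              ((1 - (K : ℝ) * v) * T) + v * T + C := by
  refine ⟨4, by norm_num, ?_⟩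
  intro Ω _ P _ K T v X μ istar ξ b arm hK hT hv hvK henv halg _ i hΔ
  have hKT : K ≤ T := le_of_max_le_left hT
  have hKv : (K : ℝ) * v ≤ 1 := by
    rwa [le_div_iff₀ (by positivity), mul_comm] at hvK
  have hexplore := integral_card_explorePulls_le halg hv.le i
  have hgreedy := integral_card_greedyPulls_le_mul halg hKv i
  have hgreedy_log := integral_card_greedyPulls_le_log henv halg (by omega) hΔ
  have hmin : min (16 * Real.log T / (μ istar - μ i) ^ 2 + 3) ((1 - (K : ℝ) * v) * T) ≤
      min (16 * Real.log T / (μ istar - μ i) ^ 2 + (1 - K * v)) ((1 - K * v) * T) + 3 := by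
    rw [← min_add_add_right]
    exact min_le_min (by linarith) (by linarith)
  linarith [integral_pullCount_le halg hKT i, le_min hgreedy_log hgreedy]
end
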